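/- Let X be a Banach space and K ⊆ X. Suppose that for every ε > 0 there exists a relatively weakly compact set K_ε ⊆ X that is an ε-net for K, i.e. for every x ∈ K there is y ∈ K_ε with ‖x − y‖ < ε. Then K is relatively weakly compact. -/

import Mathlib

/-- A set `K ⊆ X` is relatively weakly compact if its closure in the weak topology is
weakly compact. -/
def RelWeaklyCompact {X : Type*} [NormedAddCommGroup X] [NormedSpace ℝ X]
    (K : Set X) : Prop :=
  IsCompact (closure ((toWeakSpace ℝ X) '' K))

section aux

open NormedSpace Metric Set Pointwise

variable {X : Type*} [NormedAddCommGroup X] [NormedSpace ℝ X]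

/-- The canonical map from the weak space into the bidual with weak-star topology. -/
noncomputable def weakToBidual (x : WeakSpace ℝ X) : WeakDual ℝ (StrongDual ℝ X) :=
  StrongDual.toWeakDual (inclusionInDoubleDual ℝ X ((toWeakSpace ℝ X).symm x))

lemma continuous_weakToBidual : Continuous (weakToBidual (X := X)) := by
  apply WeakBilin.continuous_of_continuous_eval
  intro y
  exact WeakBilin.eval_continuous ((topDualPairing ℝ X).flip) y

lemma isEmbedding_weakToBidual : Topology.IsEmbedding (weakToBidual (X := X)) := by
  have hinj : Function.Injective ((topDualPairing ℝ X).flip) := by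
    intro a b hab
    apply (inclusionInDoubleDualLi (𝕜 := ℝ) (E := X)).injective
    ext f
    exact congrArg (fun g => g f) hab
  have h1 : Topology.IsEmbedding
      (fun (x : WeakSpace ℝ X) y => ((topDualPairing ℝ X).flip) x y) :=
    WeakBilin.isEmbedding hinj
  have h2 : Continuous (fun (g : WeakDual ℝ (StrongDual ℝ X)) y => (topDualPairing ℝ (StrongDual ℝ X)) g y) :=
    WeakBilin.coeFn_continuous _
  refine Topology.IsEmbedding.of_comp continuous_weakToBidual h2 ?_
  exact h1

end aux

/-- If for every `ε > 0` there is a relatively weakly compact `ε`-net for `K`, then `K`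
is relatively weakly compact. -/
theorem relWeaklyCompact_of_eps_nets {X : Type*} [NormedAddCommGroup X] [NormedSpace ℝ X]
    [CompleteSpace X] (K : Set X)
    (h : ∀ ε > (0 : ℝ), ∃ Kε : Set X, RelWeaklyCompact Kε ∧
      ∀ x ∈ K, ∃ y ∈ Kε, ‖x - y‖ < ε) :
    RelWeaklyCompact K := by
  classical
  open Pointwise in
  set j := weakToBidual (X := X) with hj
  set C : Set (WeakDual ℝ (StrongDual ℝ X)) :=
    closure (j '' ((toWeakSpace ℝ X) '' K)) with hC
  -- For each ε > 0, a compact set Aε containing j '' K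
  have key : ∀ ε > (0 : ℝ), ∃ A : Set (WeakDual ℝ (StrongDual ℝ X)),
      IsCompact A ∧ j '' ((toWeakSpace ℝ X) '' K) ⊆ A ∧
      ∀ z ∈ A, ∃ y : X, ‖StrongDual.toWeakDual.symm z
        - NormedSpace.inclusionInDoubleDual ℝ X y‖ ≤ ε := by
    intro ε hε
    obtain ⟨Kε, hKεc, hKεnet⟩ := h ε hε
    set Cε := j '' closure ((toWeakSpace ℝ X) '' Kε) with hCε
    have hCεcomp : IsCompact Cε := hKεc.image continuous_weakToBidual
    set Bε : Set (WeakDual ℝ (StrongDual ℝ X)) :=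
      WeakDual.toStrongDual ⁻¹' Metric.closedBall 0 ε with hBε
    have hBεcomp : IsCompact Bε := WeakDual.isCompact_closedBall (𝕜 := ℝ) 0 ε
    refine ⟨Cε + Bε, hCεcomp.add hBεcomp, ?_, ?_⟩
    · rintro _ ⟨_, ⟨x, hxK, rfl⟩, rfl⟩
      obtain ⟨y, hyKε, hxy⟩ := hKεnet x hxK
      have hmem1 : j ((toWeakSpace ℝ X) y) ∈ Cε :=
        Set.mem_image_of_mem j (subset_closure (Set.mem_image_of_mem _ hyKε))
      have hmem2 : j ((toWeakSpace ℝ X) (x - y)) ∈ Bε := by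
        show (NormedSpace.inclusionInDoubleDual ℝ X (x - y)) ∈ Metric.closedBall 0 ε
        rw [Metric.mem_closedBall, dist_zero_right (E := StrongDual ℝ (StrongDual ℝ X))]
        calc ‖NormedSpace.inclusionInDoubleDual ℝ X (x - y)‖
            = ‖x - y‖ := (NormedSpace.inclusionInDoubleDualLi ℝ).norm_map _
          _ ≤ ε := hxy.le
      have jadd : ∀ a b : WeakSpace ℝ X, j (a + b) = j a + j b := by
        intro a b
        simp only [hj, weakToBidual, map_add]
      have hsplit : (toWeakSpace ℝ X) x
          = (toWeakSpace ℝ X) y + (toWeakSpace ℝ X) (x - y) := by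
        rw [← map_add]
        congr 1
        abel
      have heq : j ((toWeakSpace ℝ X) x)
          = j ((toWeakSpace ℝ X) y) + j ((toWeakSpace ℝ X) (x - y)) := by
        rw [hsplit, jadd]
      rw [heq]
      exact Set.add_mem_add hmem1 hmem2
    · intro z hz
      obtain ⟨c, hc, b, hb, rfl⟩ := Set.mem_add.mp hz
      obtain ⟨y', hy', rfl⟩ := hc
      refine ⟨(toWeakSpace ℝ X).symm y', ?_⟩
      have hb' : ‖WeakDual.toStrongDual b‖ ≤ ε := by
        have := hb
        rw [hBε, Set.mem_preimage, Metric.mem_closedBall, dist_zero_right (E := StrongDual ℝ (StrongDual ℝ X))] at this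
        exact this
      have : StrongDual.toWeakDual.symm (j y' + b)
          - NormedSpace.inclusionInDoubleDual ℝ X ((toWeakSpace ℝ X).symm y')
          = WeakDual.toStrongDual b := by
        rw [map_add]
        show NormedSpace.inclusionInDoubleDual ℝ X ((toWeakSpace ℝ X).symm y')
          + StrongDual.toWeakDual.symm b - _ = _
        rw [add_sub_cancel_left]
        rfl
      rw [this]
      exact hb'
  -- C is compact
  obtain ⟨A₁, hA₁comp, hA₁sub, -⟩ := key 1 one_pos
  have hCcomp : IsCompact C := hA₁comp.of_isClosed_subset isClosed_closure
    (closure_minimal hA₁sub hA₁comp.isClosed)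
  -- C ⊆ range j
  have hCrange : C ⊆ Set.range j := by
    intro z hz
    have hcl : StrongDual.toWeakDual.symm z ∈
        closure (Set.range (NormedSpace.inclusionInDoubleDual ℝ X)) := by
      refine (Metric.mem_closure_iff (α := StrongDual ℝ (StrongDual ℝ X))).mpr ?_
      intro δ hδ
      obtain ⟨A, hAcomp, hAsub, hAnear⟩ := key (δ/2) (by linarith)
      have hzA : z ∈ A := closure_minimal hAsub hAcomp.isClosed hz
      obtain ⟨y, hy⟩ := hAnear z hzA
      refine ⟨NormedSpace.inclusionInDoubleDual ℝ X y, Set.mem_range_self y, ?_⟩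
      rw [dist_eq_norm (E := StrongDual ℝ (StrongDual ℝ X))]
      calc ‖_ - _‖ ≤ δ/2 := hy
        _ < δ := by linarith
    have hclosed : IsClosed (Set.range (NormedSpace.inclusionInDoubleDual ℝ X)) := by
      have : Isometry (NormedSpace.inclusionInDoubleDual ℝ X) :=
        (NormedSpace.inclusionInDoubleDualLi ℝ).isometry
      exact this.isClosedEmbedding.isClosed_range
    rw [hclosed.closure_eq] at hcl
    obtain ⟨y, hy⟩ := hcl
    refine ⟨(toWeakSpace ℝ X) y, ?_⟩
    simp only [hj, weakToBidual, LinearEquiv.symm_apply_apply, hy]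
    exact StrongDual.toWeakDual.apply_symm_apply z
  -- conclude
  have hemb := isEmbedding_weakToBidual (X := X)
  rw [RelWeaklyCompact, hemb.isCompact_iff]
  have hclosureeq : j '' closure ((toWeakSpace ℝ X) '' K) = C := by
    rw [hemb.isInducing.closure_eq_preimage_closure_image,
      Set.image_preimage_eq_inter_range, Set.inter_eq_left.mpr hCrange]
  rw [hclosureeq]
  exact hCcomp
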